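/- (Theorem 3.1, equality case, converse direction) Assume the Riemann–Roch hypothesis with g ≥ 2 and let H be a divisor with deg H = 2 and rk|H| = 1 (so Γ is hyperelliptic). Let D be a special divisor (D effective, rk|K − D| ≥ 0) attaining equality in Clifford's inequality, i.e. 2·rk|D| = deg D. Then D is linearly equivalent to rk|D| · H, i.e. D is a multiple of the g¹₂. -/

import Mathlib

/-- A divisor on `Γ` is a finitely supported function `Γ → ℤ`. -/
abbrev Divisor (Γ : Type) : Type := Γ →₀ ℤ

/-- The degree of a divisor is the (finite) sum of its values. -/
def deg {Γ : Type} (D : Divisor Γ) : ℤ := D.sum fun _ n => n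

/-- A divisor is effective if all of its values are nonnegative. -/
def Effective {Γ : Type} (D : Divisor Γ) : Prop := ∀ p, 0 ≤ D p

/-- The complete linear system `|D|` with respect to a fixed subgroup `P`
of principal divisors: all effective divisors linearly equivalent to `D`
(where `D ~ E` iff `D - E ∈ P`). -/
def LinSys {Γ : Type} (P : AddSubgroup (Divisor Γ)) (D : Divisor Γ) : Set (Divisor Γ) :=
  {E | Effective E ∧ D - E ∈ P}

/-- The set of candidate ranks of `|D|`: integers `r ≥ 0` such that
`|D - E| ≠ ∅` for every effective divisor `E` of degree `r`. -/
def RankSet {Γ : Type} (P : AddSubgroup (Divisor Γ)) (D : Divisor Γ) : Set ℤ :=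
  {r | 0 ≤ r ∧ ∀ E : Divisor Γ, Effective E → deg E = r → LinSys P (D - E) ≠ ∅}

open scoped Classical in
/-- The rank `rk|D|` of the complete linear system of `D`: it is `-1` if
`|D| = ∅`, and otherwise the largest `r ≥ 0` such that `|D - E| ≠ ∅` for
every effective divisor `E` of degree `r`. -/
noncomputable def rk {Γ : Type} (P : AddSubgroup (Divisor Γ)) (D : Divisor Γ) : ℤ :=
  if LinSys P D = ∅ then -1 else sSup (RankSet P D)

namespace CliffordAux

variable {Γ : Type}

/-- `deg` as an additive monoid hom. -/
noncomputable def degHom (Γ : Type) : Divisor Γ →+ ℤ :=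
  Finsupp.liftAddHom (fun _ => AddMonoidHom.id ℤ)

lemma deg_eq (D : Divisor Γ) : deg D = degHom Γ D := by
  simp [deg, degHom, Finsupp.liftAddHom_apply, Finsupp.sum]

lemma deg_sub (A B : Divisor Γ) : deg (A - B) = deg A - deg B := by
  simp [deg_eq, map_sub]

lemma deg_add (A B : Divisor Γ) : deg (A + B) = deg A + deg B := by
  simp [deg_eq, map_add]

lemma deg_zero : deg (0 : Divisor Γ) = 0 := by simp [deg_eq, map_zero]

lemma deg_smul (n : ℤ) (A : Divisor Γ) : deg (n • A) = n * deg A := by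
  simp [deg_eq, map_zsmul, smul_eq_mul]

lemma deg_nonneg {D : Divisor Γ} (h : Effective D) : 0 ≤ deg D :=
  Finset.sum_nonneg fun i _ => h i

lemma eq_zero_of_effective_deg_zero {D : Divisor Γ} (h : Effective D)
    (h0 : deg D = 0) : D = 0 := by
  have key := (Finset.sum_eq_zero_iff_of_nonneg (fun i (_ : i ∈ D.support) => h i)).mp h0
  ext p
  by_cases hp : p ∈ D.support
  · simpa using key p hp
  · simpa using Finsupp.notMem_support_iff.mp hp

lemma effective_zero : Effective (0 : Divisor Γ) := fun p => by simp

lemma effective_add {A B : Divisor Γ} (hA : Effective A) (hB : Effective B) :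
    Effective (A + B) := fun p => by
  have := hA p; have := hB p; simp only [Finsupp.add_apply]; omega

lemma effective_single (p : Γ) {n : ℤ} (hn : 0 ≤ n) :
    Effective (Finsupp.single p n : Divisor Γ) := by
  intro q
  rcases eq_or_ne p q with rfl | h
  · simpa using hn
  · simp [Finsupp.single_apply_eq_zero.mpr fun hq => absurd hq.symm h]

lemma deg_single (p : Γ) (n : ℤ) : deg (Finsupp.single p n : Divisor Γ) = n := by
  simp [deg, Finsupp.sum_single_index]

variable [Nonempty Γ] (P : AddSubgroup (Divisor Γ))

lemma mem_linSys_self {D : Divisor Γ} (hD : Effective D) : D ∈ LinSys P D :=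
  ⟨hD, by rw [sub_self]; exact zero_mem P⟩

/-- members of a linear system have the same degree. -/
lemma deg_of_mem_linSys (hP : ∀ f ∈ P, deg f = 0) {D E : Divisor Γ}
    (h : E ∈ LinSys P D) : deg E = deg D := by
  have := hP _ h.2
  rw [deg_sub] at this; omega

/-- candidate ranks are bounded above by the degree. -/
lemma bddAbove_rankSet (hP : ∀ f ∈ P, deg f = 0) (D : Divisor Γ) :
    BddAbove (RankSet P D) := by
  refine ⟨max 0 (deg D), fun r hr => ?_⟩
  obtain ⟨hr0, hr⟩ := hr
  obtain ⟨p⟩ := ‹Nonempty Γ›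
  have hne := hr (Finsupp.single p r) (effective_single p hr0) (deg_single p r)
  obtain ⟨F, hF⟩ := Set.nonempty_iff_ne_empty.mpr hne
  have hdF : deg F = deg D - r := by
    rw [deg_of_mem_linSys P hP hF, deg_sub, deg_single]
  have := deg_nonneg hF.1
  have := le_max_right (0 : ℤ) (deg D)
  omega

lemma zero_mem_rankSet {D : Divisor Γ} (h : LinSys P D ≠ ∅) :
    (0 : ℤ) ∈ RankSet P D := by
  refine ⟨le_refl 0, fun E hE hdE => ?_⟩
  have : E = 0 := eq_zero_of_effective_deg_zero hE hdE
  subst this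
  simpa using h

lemma linSys_nonempty_of_mem_rankSet {D : Divisor Γ} {r : ℤ}
    (h : r ∈ RankSet P D) : LinSys P D ≠ ∅ := by
  obtain ⟨hr0, hr⟩ := h
  obtain ⟨p⟩ := ‹Nonempty Γ›
  have hne := hr (Finsupp.single p r) (effective_single p hr0) (deg_single p r)
  obtain ⟨F, hF⟩ := Set.nonempty_iff_ne_empty.mpr hne
  refine (Set.nonempty_iff_ne_empty.mp ⟨F + Finsupp.single p r, ?_, ?_⟩)
  · exact effective_add hF.1 (effective_single p hr0)
  · have := hF.2
    have heq : D - (F + Finsupp.single p r) = D - Finsupp.single p r - F := by abel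
    rw [heq]; exact this

lemma le_rk (hP : ∀ f ∈ P, deg f = 0) {D : Divisor Γ} {r : ℤ}
    (h : r ∈ RankSet P D) : r ≤ rk P D := by
  rw [rk, if_neg (linSys_nonempty_of_mem_rankSet P h)]
  exact le_csSup (bddAbove_rankSet P hP D) h

lemma rk_nonneg {D : Divisor Γ} (hP : ∀ f ∈ P, deg f = 0)
    (h : LinSys P D ≠ ∅) : 0 ≤ rk P D :=
  le_rk P hP (zero_mem_rankSet P h)

lemma rk_mem_rankSet {D : Divisor Γ} (hP : ∀ f ∈ P, deg f = 0)
    (h : LinSys P D ≠ ∅) : rk P D ∈ RankSet P D := by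
  rw [rk, if_neg h]
  exact Int.csSup_mem ⟨0, zero_mem_rankSet P h⟩ (bddAbove_rankSet P hP D)

lemma linSys_nonempty_of_rk_nonneg {D : Divisor Γ} (h : 0 ≤ rk P D) :
    LinSys P D ≠ ∅ := by
  intro hempty
  rw [rk, if_pos hempty] at h
  omega

/-- an effective divisor of degree `≥ a ≥ 0` splits off an effective part of
degree `a`. -/
lemma exists_split (E : Divisor Γ) (hE : Effective E) (a : ℤ) (h0 : 0 ≤ a)
    (hle : a ≤ deg E) : ∃ E₁ : Divisor Γ, Effective E₁ ∧ Effective (E - E₁) ∧ deg E₁ = a := by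
  revert hle
  refine Int.le_induction (motive := fun a _ => a ≤ deg E → ∃ E₁ : Divisor Γ,
    Effective E₁ ∧ Effective (E - E₁) ∧ deg E₁ = a) ?_ ?_ a h0
  · exact fun _ => ⟨0, effective_zero, by simpa using hE, deg_zero⟩
  · intro n hn ih hle
    obtain ⟨E₁, hE₁, hE₂, hd₁⟩ := ih (by omega)
    have hd₂ : deg (E - E₁) = deg E - n := by rw [deg_sub, hd₁]
    have hpos : 0 < deg (E - E₁) := by omega
    have hex : ∃ p, 0 < (E - E₁) p := by
      by_contra hc
      push_neg at hc
      have hz : E - E₁ = 0 := by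
        ext p
        have h1 := hE₂ p
        have h2 := hc p
        simp only [Finsupp.coe_zero, Pi.zero_apply]
        omega
      rw [hz, deg_zero] at hpos
      omega
    obtain ⟨p, hp⟩ := hex
    refine ⟨E₁ + Finsupp.single p 1, effective_add hE₁ (effective_single p one_pos.le), ?_, ?_⟩
    · intro q
      have h1 : E - (E₁ + Finsupp.single p 1) = (E - E₁) - Finsupp.single p 1 := by abel
      rw [h1]
      have h2 := hE₂ q
      have hp' := hp
      simp only [Finsupp.sub_apply] at h2 hp'
      rcases eq_or_ne p q with rfl | hq
      · simp only [Finsupp.sub_apply, Finsupp.single_eq_same]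
        omega
      · simp only [Finsupp.sub_apply,
          Finsupp.single_apply_eq_zero.mpr fun hq' => absurd hq'.symm hq]
        omega
    · rw [deg_add, hd₁, deg_single]

/-- superadditivity of the rank. -/
lemma rk_add_ge (hP : ∀ f ∈ P, deg f = 0) (A B : Divisor Γ)
    (hA : 0 ≤ rk P A) (hB : 0 ≤ rk P B) :
    rk P A + rk P B ≤ rk P (A + B) := by
  have hAmem := rk_mem_rankSet P hP (linSys_nonempty_of_rk_nonneg P hA)
  have hBmem := rk_mem_rankSet P hP (linSys_nonempty_of_rk_nonneg P hB)
  refine le_rk P hP ⟨by omega, fun E hE hdE => ?_⟩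
  obtain ⟨E₁, hE₁, hE₂, hd₁⟩ := exists_split E hE (rk P A) hA (by omega)
  have hd₂ : deg (E - E₁) = rk P B := by rw [deg_sub]; omega
  obtain ⟨F₁, hF₁⟩ := Set.nonempty_iff_ne_empty.mpr (hAmem.2 E₁ hE₁ hd₁)
  obtain ⟨F₂, hF₂⟩ := Set.nonempty_iff_ne_empty.mpr (hBmem.2 (E - E₁) hE₂ hd₂)
  refine Set.nonempty_iff_ne_empty.mp ⟨F₁ + F₂, effective_add hF₁.1 hF₂.1, ?_⟩
  have h1 := hF₁.2
  have h2 := hF₂.2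
  have heq : A + B - E - (F₁ + F₂) = (A - E₁ - F₁) + (B - (E - E₁) - F₂) := by abel
  rw [heq]
  exact add_mem h1 h2

lemma rk_nsmul_ge (hP : ∀ f ∈ P, deg f = 0) (H : Divisor Γ) (hH : 0 ≤ rk P H)
    (n : ℤ) (hn : 0 ≤ n) : n * rk P H ≤ rk P (n • H) := by
  refine Int.le_induction (motive := fun n _ => n * rk P H ≤ rk P (n • H)) ?_ ?_ n hn
  · show (0 : ℤ) * rk P H ≤ rk P ((0 : ℤ) • H)
    have h00 : (0 : ℤ) • H = 0 := by simp
    rw [h00]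
    have h0 : LinSys P (0 : Divisor Γ) ≠ ∅ :=
      Set.nonempty_iff_ne_empty.mp ⟨0, effective_zero, by rw [sub_self]; exact zero_mem P⟩
    simpa using rk_nonneg P hP h0
  · intro m hm ih
    show (m + 1) * rk P H ≤ rk P ((m + 1) • H)
    have h1 : (m + 1) • H = m • H + H := by rw [add_smul, one_smul]
    rw [h1]
    have h2 := rk_add_ge P hP (m • H) H (le_trans (by positivity) ih) hH
    nlinarith

end CliffordAux

open CliffordAux in
/-- Theorem 3.1, equality case, converse direction: under
Riemann–Roch with `g ≥ 2` and a `g¹₂` divisor `H`, a special divisor `D`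
(effective, `rk|K - D| ≥ 0`) attaining equality `2 rk|D| = deg D` in
Clifford's inequality is linearly equivalent to `rk|D| • H`. -/
theorem multiple_of_g12_of_clifford_equality {Γ : Type} [Nonempty Γ]
    (P : AddSubgroup (Divisor Γ)) (hP : ∀ f ∈ P, deg f = 0)
    (K : Divisor Γ) (g : ℤ)
    (hRR : ∀ D : Divisor Γ, rk P D - rk P (K - D) = deg D - g + 1)
    (hg : 2 ≤ g)
    (H : Divisor Γ) (hdegH : deg H = 2) (hrkH : rk P H = 1)
    (D : Divisor Γ) (hD : Effective D) (hspecial : 0 ≤ rk P (K - D))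
    (heq : 2 * rk P D = deg D) :
    D - (rk P D) • H ∈ P := by
  set r := rk P D with hr
  -- `|D|` is nonempty since `D` is effective, so `r ≥ 0`
  have hDne : LinSys P D ≠ ∅ :=
    Set.nonempty_iff_ne_empty.mp ⟨D, mem_linSys_self P hD⟩
  have hr0 : 0 ≤ r := rk_nonneg P hP hDne
  -- Riemann-Roch for D with Clifford equality: rk (K - D) = g - 1 - r
  have hKD : rk P (K - D) = g - 1 - r := by
    have := hRR D
    omega
  -- rank of r • H is at least r
  have hrH : r ≤ rk P (r • H) := by
    have := rk_nsmul_ge P hP H (by omega) r hr0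
    nlinarith
  -- superadditivity: rk (K - D + r • H) ≥ g - 1
  have h3 : g - 1 ≤ rk P (K - D + r • H) := by
    have := rk_add_ge P hP (K - D) (r • H) hspecial (le_trans hr0 hrH)
    omega
  -- Riemann-Roch at D - r • H
  have hdeg0 : deg (D - r • H) = 0 := by
    rw [deg_sub, deg_smul, hdegH]
    omega
  have hRR2 := hRR (D - r • H)
  have hKrw : K - (D - r • H) = K - D + r • H := by abel
  rw [hKrw, hdeg0] at hRR2
  have hrfinal : 0 ≤ rk P (D - r • H) := by omega
  obtain ⟨F, hF⟩ := Set.nonempty_iff_ne_empty.mpr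
    (linSys_nonempty_of_rk_nonneg P hrfinal)
  have hdF : deg F = 0 := by
    have := hP _ hF.2
    rw [deg_sub, hdeg0] at this
    omega
  have hF0 : F = 0 := eq_zero_of_effective_deg_zero hF.1 hdF
  have := hF.2
  rw [hF0, sub_zero] at this
  exact this
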